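/- arXiv:1405.7675 — 2 statements merged into one kernel-verified Lean document; each statement's English description precedes it below -/
import Mathlib

section
/- The interval system 𝐀x + 𝐁∀y ≤ 𝐛, x ≥ 0 (with 𝐀 = 𝐀∀ + 𝐀∃, the matrix 𝐁 = 𝐁∀ entirely universally quantified, and 𝐛 = 𝐛∀ + 𝐛∃) is AE solvable—meaning for every realization A∀ ∈ 𝐀∀, B∀ ∈ 𝐁∀, b∀ ∈ 𝐛∀ there exist A∃ ∈ 𝐀∃, b∃ ∈ 𝐛∃ such that (A∀+A∃)x + B∀y ≤ b∀+b∃, x ≥ 0 has a solution—if and only if the system has an AE solution (a fixed (x,y) working for all ∀-realizations with appropriate ∃-realizations). -/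
/-!
For fixed `x ≥ 0` and `y = u - v` with `u, v ≥ 0`, the worst realization is `A∀ = A∀c + A∀Δ`,
`b∀ = b∀c - b∀Δ` answered by `A∃ = A∃c - A∃Δ`, `b∃ = b∃c + b∃Δ`, together with the bound
`B∀ y ≤ (Bc + BΔ) u + (BΔ - Bc) v`. A nonnegative solution of the resulting linear system
`A* x + (Bc + BΔ) u + (BΔ - Bc) v ≤ b*` is therefore an AE solution. If there is none, Farkas' lemma gives `p ≥ 0` with `pᵀA* ≥ 0`,
`|pᵀBc| ≤ pᵀBΔ` and `pᵀb* < 0`; shifting each column of `Bc` by a multiple of `BΔ` yields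
`B∀` in its interval with `pᵀB∀ = 0`, and then `p` certifies that the realization
`(A∀c + A∀Δ, B∀, b∀c - b∀Δ)` has no solution, whichever `A∃`, `b∃` are chosen.
-/

open Matrix Module

section Farkas

variable {𝕜 E : Type*} [Field 𝕜] [LinearOrder 𝕜] [IsStrictOrderedRing 𝕜]
  [AddCommGroup E] [Module 𝕜 E]

theorem PointedCone.mem_hull_image_or_exists_dual_neg {ι : Type*} (t : Finset ι) (v : ι → E)
    (b : E) :
    b ∈ PointedCone.hull 𝕜 (v '' t) ∨ ∃ f : Dual 𝕜 E, (∀ i ∈ t, 0 ≤ f (v i)) ∧ f b < 0 := by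
  classical
  induction t using Finset.induction_on generalizing v b with
  | empty =>
    by_cases hb : b = 0
    · exact Or.inl (hb ▸ zero_mem _)
    · obtain ⟨φ, hφ⟩ : ∃ φ : Dual 𝕜 E, φ b ≠ 0 := by
        by_contra! h
        exact hb ((forall_dual_apply_eq_zero_iff 𝕜 b).1 h)
      refine Or.inr ⟨-φ b • φ, by simp, ?_⟩
      simpa using mul_self_pos.2 hφ
  | insert a t ha ih =>
    rcases ih v b with hb | ⟨p, hp, hpb⟩
    · exact Or.inl (Submodule.span_mono (Set.image_mono (by simp)) hb)
    rcases le_or_gt 0 (p (v a)) with hpa | hpa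
    · exact Or.inr ⟨p, Finset.forall_mem_insert _ _ _ |>.2 ⟨hpa, hp⟩, hpb⟩
    -- `π` projects along `v a` onto `ker p`, reducing to the cone over `t`.
    let π : E →ₗ[𝕜] E := LinearMap.id - ((p (v a))⁻¹ • p).smulRight (v a)
    have hπ : ∀ u, u = π u + (p u / p (v a)) • v a := fun u => by
      simp [π, div_eq_inv_mul]
    rcases ih (π ∘ v) (π b) with hπb | ⟨q, hq, hqb⟩
    · left
      have hva : v a ∈ PointedCone.hull 𝕜 (v '' ↑(insert a t)) :=
        PointedCone.subset_hull ⟨a, by simp, rfl⟩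
      have hle : PointedCone.hull 𝕜 (π ∘ v '' t) ≤ PointedCone.hull 𝕜 (v '' ↑(insert a t)) := by
        refine Submodule.span_le.2 ?_
        rintro _ ⟨i, hi, rfl⟩
        have hvi : v i ∈ PointedCone.hull 𝕜 (v '' ↑(insert a t)) :=
          PointedCone.subset_hull ⟨i, by simp [hi], rfl⟩
        have : π (v i) = v i + (-(p (v i) / p (v a))) • v a := by
          rw [neg_smul, ← sub_eq_add_neg, eq_sub_iff_add_eq, ← hπ]
        rw [Function.comp_apply, this]
        exact add_mem hvi (PointedCone.smul_mem _
          (neg_nonneg.2 (div_nonpos_of_nonneg_of_nonpos (hp i hi) hpa.le)) hva)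
      rw [hπ b]
      exact add_mem (hle hπb) (PointedCone.smul_mem _ (div_nonneg_of_nonpos hpb.le hpa.le) hva)
    · refine Or.inr ⟨q ∘ₗ π, Finset.forall_mem_insert _ _ _ |>.2 ⟨?_, hq⟩, hqb⟩
      simp [π, hpa.ne]

theorem Matrix.exists_nonneg_mulVec_eq_or_exists_vecMul_nonneg {m ι : Type*} [Fintype m]
    [Fintype ι] (M : Matrix m ι 𝕜) (b : m → 𝕜) :
    (∃ x, 0 ≤ x ∧ M *ᵥ x = b) ∨ ∃ p, 0 ≤ p ᵥ* M ∧ p ⬝ᵥ b < 0 := by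
  classical
  rcases PointedCone.mem_hull_image_or_exists_dual_neg (𝕜 := 𝕜) Finset.univ (fun j => Mᵀ j) b
    with hb | ⟨f, hf, hfb⟩
  · rw [Finset.coe_univ, Set.image_univ, PointedCone.hull,
      Submodule.mem_span_range_iff_exists_fun] at hb
    obtain ⟨c, rfl⟩ := hb
    refine Or.inl ⟨fun j => c j, fun j => (c j).2, ?_⟩
    ext i
    simp [mulVec, dotProduct, Finset.sum_apply, mul_comm, ← Nonneg.coe_smul]
  · obtain ⟨p, rfl⟩ := (dotProductEquiv 𝕜 m).surjective f
    exact Or.inr ⟨p, fun j => hf j (Finset.mem_univ j), hfb⟩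

theorem Matrix.exists_nonneg_mulVec_le_or_exists_nonneg_vecMul_nonneg {m ι : Type*} [Fintype m]
    [Fintype ι] (M : Matrix m ι 𝕜) (b : m → 𝕜) :
    (∃ x, 0 ≤ x ∧ M *ᵥ x ≤ b) ∨ ∃ p, 0 ≤ p ∧ 0 ≤ p ᵥ* M ∧ p ⬝ᵥ b < 0 := by
  classical
  rcases exists_nonneg_mulVec_eq_or_exists_vecMul_nonneg (fromCols M (1 : Matrix m m 𝕜)) b with
    ⟨z, hz, rfl⟩ | ⟨p, hp, hpb⟩
  · refine Or.inl ⟨z ∘ Sum.inl, fun j => hz _, ?_⟩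
    rw [fromCols_mulVec, one_mulVec]
    exact le_add_of_nonneg_right fun i => hz _
  · rw [vecMul_fromCols, vecMul_one, Sum.nonneg_elim_iff] at hp
    exact Or.inr ⟨p, hp.2, hp.1, hpb⟩

end Farkas

section IntervalSystems

variable {𝕜 : Type*} [Field 𝕜] [LinearOrder 𝕜] [IsStrictOrderedRing 𝕜]
  {m n n' : Type*}

theorem Matrix.mulVec_le_mulVec_of_le [Fintype n] {A A' : Matrix m n 𝕜}
    (h : ∀ i j, A i j ≤ A' i j) {x : n → 𝕜} (hx : 0 ≤ x) : A *ᵥ x ≤ A' *ᵥ x :=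
  fun i => dotProduct_le_dotProduct_of_nonneg_right (h i) hx

theorem Matrix.vecMul_le_vecMul_of_le [Fintype m] {A A' : Matrix m n 𝕜}
    (h : ∀ i j, A i j ≤ A' i j) {p : m → 𝕜} (hp : 0 ≤ p) : p ᵥ* A ≤ p ᵥ* A' :=
  fun j => dotProduct_le_dotProduct_of_nonneg_left (fun i => h i j) hp

theorem Matrix.dotProduct_nonneg_of_mulVec_add_mulVec_le [Fintype m] [Fintype n] [Fintype n']
    {M : Matrix m n 𝕜} {B : Matrix m n' 𝕜} {p : m → 𝕜} {x : n → 𝕜} {y : n' → 𝕜} {c : m → 𝕜}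
    (hp : 0 ≤ p) (hx : 0 ≤ x) (hpM : 0 ≤ p ᵥ* M) (hpB : p ᵥ* B = 0)
    (h : M *ᵥ x + B *ᵥ y ≤ c) : 0 ≤ p ⬝ᵥ c :=
  calc 0 ≤ p ᵥ* M ⬝ᵥ x := dotProduct_nonneg_of_nonneg hpM hx
    _ = p ⬝ᵥ (M *ᵥ x + B *ᵥ y) := by
      rw [dotProduct_add, dotProduct_mulVec, dotProduct_mulVec, hpB, zero_dotProduct, add_zero]
    _ ≤ p ⬝ᵥ c := dotProduct_le_dotProduct_of_nonneg_left h hp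

theorem Matrix.exists_abs_sub_le_and_vecMul_eq_zero [Fintype m] [Fintype n] [DecidableEq n]
    {Bc BΔ : Matrix m n 𝕜} (hBΔ : ∀ i j, 0 ≤ BΔ i j) {p : m → 𝕜}
    (h : ∀ j, |(p ᵥ* Bc) j| ≤ (p ᵥ* BΔ) j) :
    ∃ B : Matrix m n 𝕜, (∀ i j, |B i j - Bc i j| ≤ BΔ i j) ∧ p ᵥ* B = 0 := by
  -- where `(p ᵥ* BΔ) j = 0`, `h` forces `(p ᵥ* Bc) j = 0`, so the junk value `t j = 0` is harmless
  set t : n → 𝕜 := fun j => (p ᵥ* Bc) j / (p ᵥ* BΔ) j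
  have ht : ∀ j, |t j| ≤ 1 := fun j => by
    rw [abs_div]
    exact div_le_one_of_le₀ ((h j).trans (le_abs_self _)) (abs_nonneg _)
  refine ⟨Bc - BΔ * diagonal t, fun i j => ?_, ?_⟩
  · rw [sub_apply, mul_diagonal, sub_sub_cancel_left, abs_neg, abs_mul, abs_of_nonneg (hBΔ i j)]
    exact mul_le_of_le_one_right (hBΔ i j) (ht j)
  · ext j
    rw [vecMul_sub, ← vecMul_vecMul, Pi.sub_apply, vecMul_diagonal, Pi.zero_apply, sub_eq_zero]
    rcases eq_or_ne ((p ᵥ* BΔ) j) 0 with h0 | h0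
    · simpa [h0] using h j
    · exact (mul_div_cancel₀ _ h0).symm

theorem aeSolution_of_worstCase_le [Fintype n] [Fintype n']
    {Afc AfΔ Aec AeΔ : Matrix m n 𝕜} {Bfc BfΔ : Matrix m n' 𝕜} {bfc bfΔ bec beΔ : m → 𝕜}
    (hAeΔ : ∀ i j, 0 ≤ AeΔ i j) (hbeΔ : ∀ i, 0 ≤ beΔ i)
    {x : n → 𝕜} {u v : n' → 𝕜} (hx : 0 ≤ x) (hu : 0 ≤ u) (hv : 0 ≤ v)
    (h : (Afc + AfΔ + (Aec - AeΔ)) *ᵥ x + ((Bfc + BfΔ) *ᵥ u + (BfΔ - Bfc) *ᵥ v) ≤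
      bfc - bfΔ + (bec + beΔ)) :
    ∀ Af : Matrix m n 𝕜, (∀ i j, |Af i j - Afc i j| ≤ AfΔ i j) →
    ∀ Bf : Matrix m n' 𝕜, (∀ i j, |Bf i j - Bfc i j| ≤ BfΔ i j) →
    ∀ bf : m → 𝕜, (∀ i, |bf i - bfc i| ≤ bfΔ i) →
      ∃ Ae : Matrix m n 𝕜, (∀ i j, |Ae i j - Aec i j| ≤ AeΔ i j) ∧
      ∃ be : m → 𝕜, (∀ i, |be i - bec i| ≤ beΔ i) ∧
        (∀ i, ((Af + Ae) *ᵥ x) i + (Bf *ᵥ (u - v)) i ≤ bf i + be i) ∧ (∀ j, 0 ≤ x j) := by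
  intro Af hAf Bf hBf bf hbf
  refine ⟨Aec - AeΔ, fun i j => by simp [abs_of_nonneg (hAeΔ i j)],
    bec + beΔ, fun i => by simp [abs_of_nonneg (hbeΔ i)], ?_, hx⟩
  have hA : (Af + (Aec - AeΔ)) *ᵥ x ≤ (Afc + AfΔ + (Aec - AeΔ)) *ᵥ x :=
    mulVec_le_mulVec_of_le (fun i j => by
      simp only [Matrix.add_apply, Matrix.sub_apply]; linarith [abs_le.1 (hAf i j)]) hx
  have hB : Bf *ᵥ (u - v) ≤ (Bfc + BfΔ) *ᵥ u + (BfΔ - Bfc) *ᵥ v := by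
    rw [mulVec_sub, sub_eq_add_neg, ← neg_mulVec]
    exact add_le_add
      (mulVec_le_mulVec_of_le (fun i j => by
        simp only [Matrix.add_apply]; linarith [abs_le.1 (hBf i j)]) hu)
      (mulVec_le_mulVec_of_le (fun i j => by
        simp only [Matrix.sub_apply, Matrix.neg_apply]; linarith [abs_le.1 (hBf i j)]) hv)
  have hb : bfc - bfΔ + (bec + beΔ) ≤ bf + (bec + beΔ) :=
    add_le_add_left (fun i => by simp only [Pi.sub_apply]; linarith [abs_le.1 (hbf i)]) _
  exact (add_le_add hA hB).trans (h.trans hb)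

theorem not_aeSolvable_of_certificate [Fintype m] [Fintype n] [Fintype n'] [DecidableEq n']
    {Afc AfΔ Aec AeΔ : Matrix m n 𝕜} {Bfc BfΔ : Matrix m n' 𝕜} {bfc bfΔ bec beΔ : m → 𝕜}
    (hAfΔ : ∀ i j, 0 ≤ AfΔ i j) (hBfΔ : ∀ i j, 0 ≤ BfΔ i j) (hbfΔ : ∀ i, 0 ≤ bfΔ i)
    {p : m → 𝕜} (hp : 0 ≤ p) (hpA : 0 ≤ p ᵥ* (Afc + AfΔ + (Aec - AeΔ)))
    (hpB : ∀ j, |(p ᵥ* Bfc) j| ≤ (p ᵥ* BfΔ) j) (hpb : p ⬝ᵥ (bfc - bfΔ + (bec + beΔ)) < 0) :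
    ¬ ∀ Af : Matrix m n 𝕜, (∀ i j, |Af i j - Afc i j| ≤ AfΔ i j) →
      ∀ Bf : Matrix m n' 𝕜, (∀ i j, |Bf i j - Bfc i j| ≤ BfΔ i j) →
      ∀ bf : m → 𝕜, (∀ i, |bf i - bfc i| ≤ bfΔ i) →
        ∃ Ae : Matrix m n 𝕜, (∀ i j, |Ae i j - Aec i j| ≤ AeΔ i j) ∧
        ∃ be : m → 𝕜, (∀ i, |be i - bec i| ≤ beΔ i) ∧
        ∃ (x : n → 𝕜) (y : n' → 𝕜),
          (∀ i, ((Af + Ae) *ᵥ x) i + (Bf *ᵥ y) i ≤ bf i + be i) ∧ (∀ j, 0 ≤ x j) := by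
  intro H
  obtain ⟨Bf, hBf, hpBf⟩ := exists_abs_sub_le_and_vecMul_eq_zero hBfΔ hpB
  obtain ⟨Ae, hAe, be, hbe, x, y, hxy, hx⟩ :=
    H (Afc + AfΔ) (fun i j => by simp [abs_of_nonneg (hAfΔ i j)]) Bf hBf
      (bfc - bfΔ) (fun i => by simp [abs_of_nonneg (hbfΔ i)])
  have hpAe : 0 ≤ p ᵥ* (Afc + AfΔ + Ae) :=
    hpA.trans <| vecMul_le_vecMul_of_le (fun i j => by
      simp only [Matrix.add_apply, Matrix.sub_apply]; linarith [abs_le.1 (hAe i j)]) hp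
  have hrhs : bfc - bfΔ + be ≤ bfc - bfΔ + (bec + beΔ) :=
    add_le_add_right (fun i => by simp only [Pi.add_apply]; linarith [abs_le.1 (hbe i)]) _
  exact hpb.not_ge <| (dotProduct_nonneg_of_mulVec_add_mulVec_le hp hx hpAe hpBf hxy).trans
    (dotProduct_le_dotProduct_of_nonneg_left hrhs hp)

end IntervalSystems

/-- The interval system `𝐀x + 𝐁∀y ≤ 𝐛, x ≥ 0` (with `𝐁` entirely universally
quantified) is AE solvable if and only if it has an AE solution. -/
theorem ae_solvable_iff_ae_solution_B_forall {m n n' : ℕ}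
    (Afc AfΔ Aec AeΔ : Matrix (Fin m) (Fin n) ℝ)
    (Bfc BfΔ : Matrix (Fin m) (Fin n') ℝ)
    (bfc bfΔ bec beΔ : Fin m → ℝ)
    (hAfΔ : ∀ i j, 0 ≤ AfΔ i j) (hAeΔ : ∀ i j, 0 ≤ AeΔ i j)
    (hBfΔ : ∀ i j, 0 ≤ BfΔ i j)
    (hbfΔ : ∀ i, 0 ≤ bfΔ i) (hbeΔ : ∀ i, 0 ≤ beΔ i) :
    (∀ Af : Matrix (Fin m) (Fin n) ℝ, (∀ i j, |Af i j - Afc i j| ≤ AfΔ i j) →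
     ∀ Bf : Matrix (Fin m) (Fin n') ℝ, (∀ i j, |Bf i j - Bfc i j| ≤ BfΔ i j) →
     ∀ bf : Fin m → ℝ, (∀ i, |bf i - bfc i| ≤ bfΔ i) →
      ∃ Ae : Matrix (Fin m) (Fin n) ℝ, (∀ i j, |Ae i j - Aec i j| ≤ AeΔ i j) ∧
      ∃ be : Fin m → ℝ, (∀ i, |be i - bec i| ≤ beΔ i) ∧
      ∃ (x : Fin n → ℝ) (y : Fin n' → ℝ),
        (∀ i, ((Af + Ae).mulVec x) i + (Bf.mulVec y) i ≤ bf i + be i) ∧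
        (∀ j, 0 ≤ x j))
    ↔
    (∃ (x : Fin n → ℝ) (y : Fin n' → ℝ),
      ∀ Af : Matrix (Fin m) (Fin n) ℝ, (∀ i j, |Af i j - Afc i j| ≤ AfΔ i j) →
      ∀ Bf : Matrix (Fin m) (Fin n') ℝ, (∀ i j, |Bf i j - Bfc i j| ≤ BfΔ i j) →
      ∀ bf : Fin m → ℝ, (∀ i, |bf i - bfc i| ≤ bfΔ i) →
        ∃ Ae : Matrix (Fin m) (Fin n) ℝ, (∀ i j, |Ae i j - Aec i j| ≤ AeΔ i j) ∧
        ∃ be : Fin m → ℝ, (∀ i, |be i - bec i| ≤ beΔ i) ∧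
          (∀ i, ((Af + Ae).mulVec x) i + (Bf.mulVec y) i ≤ bf i + be i) ∧
          (∀ j, 0 ≤ x j)) := by
  refine ⟨fun H => ?_, fun ⟨x, y, h⟩ Af hAf Bf hBf bf hbf => ?_⟩
  · rcases exists_nonneg_mulVec_le_or_exists_nonneg_vecMul_nonneg
        (fromCols (Afc + AfΔ + (Aec - AeΔ)) (fromCols (Bfc + BfΔ) (BfΔ - Bfc)))
        (bfc - bfΔ + (bec + beΔ)) with ⟨z, hz, hzb⟩ | ⟨p, hp, hpM, hpb⟩
    · rw [fromCols_mulVec, fromCols_mulVec] at hzb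
      exact ⟨_, _, aeSolution_of_worstCase_le hAeΔ hbeΔ (fun _ => hz _) (fun _ => hz _)
        (fun _ => hz _) hzb⟩
    rw [vecMul_fromCols, vecMul_fromCols, Sum.nonneg_elim_iff, Sum.nonneg_elim_iff] at hpM
    obtain ⟨hpA, hpBup, hpBdown⟩ := hpM
    have hpB : ∀ j, |(p ᵥ* Bfc) j| ≤ (p ᵥ* BfΔ) j := fun j => by
      have hup : 0 ≤ (p ᵥ* Bfc) j + (p ᵥ* BfΔ) j := by simpa [vecMul_add] using hpBup j
      have hdown : 0 ≤ (p ᵥ* BfΔ) j - (p ᵥ* Bfc) j := by simpa [vecMul_sub] using hpBdown j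
      exact abs_le.2 ⟨by linarith, by linarith⟩
    exact absurd H (not_aeSolvable_of_certificate hAfΔ hBfΔ hbfΔ hp hpA hpB hpb)
  · obtain ⟨Ae, hAe, be, hbe, hxy, hx⟩ := h Af hAf Bf hBf bf hbf
    exact ⟨Ae, hAe, be, hbe, x, y, hxy, hx⟩
end

section
/- The interval system 𝐀x = 𝐛, x ≥ 0 is strongly solvable if and only if for every sign vector s ∈ {±1}^m the real system (A_c + diag(s)A_Δ)x = b_c − diag(s)b_Δ, x ≥ 0 is solvable. -/
/-!
Necessity holds because every sign system `(A_c + diag(s)A_Δ, b_c − diag(s)b_Δ)` lies in `(𝐀, 𝐛)`.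
For sufficiency, if `Ax = b, x ≥ 0` has no solution for some `A ∈ 𝐀`, `b ∈ 𝐛`, Farkas' lemma gives
`y` with `yᵀA ≥ 0` and `yᵀb < 0`. For the sign vector `s` of `y` we get `yᵀ(A_c + diag(s)A_Δ) ≥ yᵀA`
and `yᵀ(b_c − diag(s)b_Δ) ≤ yᵀb`, so the same `y` certifies that the sign system indexed by `s` is
unsolvable.

Farkas' lemma is proved by induction on the number of generators: when the functional `f`
separating `b` from the smaller cone is negative on the new generator `w`, project everything
along `w` onto `ker f` and apply the induction hypothesis once more.
-/

open Finset Matrix Function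

lemma Finset.sum_insert_update_smul {R M ι : Type*} [Semiring R] [AddCommMonoid M] [Module R M]
    [DecidableEq ι] {s : Finset ι} {a : ι} (ha : a ∉ s) (x : ι → R) (t : R) (v : ι → M) :
    ∑ i ∈ insert a s, update x a t i • v i = t • v a + ∑ i ∈ s, x i • v i := by
  rw [sum_insert ha, update_self]
  congr 1
  exact sum_congr rfl fun i hi => by rw [update_of_ne (ne_of_mem_of_not_mem hi ha)]

section Farkas

variable {𝕜 M ι : Type*} [Field 𝕜] [LinearOrder 𝕜] [IsStrictOrderedRing 𝕜]
  [AddCommGroup M] [Module 𝕜 M]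

lemma Module.exists_dual_apply_neg {b : M} (hb : b ≠ 0) : ∃ f : Module.Dual 𝕜 M, f b < 0 := by
  obtain ⟨f, hf⟩ := Module.Projective.exists_dual_ne_zero 𝕜 hb
  rcases hf.lt_or_gt with h | h
  · exact ⟨f, h⟩
  · exact ⟨-f, by simpa using h⟩

lemma farkas_insert [DecidableEq ι] {s : Finset ι} {a : ι} (ha : a ∉ s)
    (ih : ∀ (v : ι → M) (b : M), (∃ x : ι → 𝕜, 0 ≤ x ∧ ∑ i ∈ s, x i • v i = b) ∨
      ∃ f : Module.Dual 𝕜 M, (∀ i ∈ s, 0 ≤ f (v i)) ∧ f b < 0)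
    (v : ι → M) (b : M) :
    (∃ x : ι → 𝕜, 0 ≤ x ∧ ∑ i ∈ insert a s, x i • v i = b) ∨
      ∃ f : Module.Dual 𝕜 M, (∀ i ∈ insert a s, 0 ≤ f (v i)) ∧ f b < 0 := by
  rcases ih v b with ⟨x, hx, hxb⟩ | ⟨f, hf, hfb⟩
  · refine .inl ⟨update x a 0, le_update_iff.2 ⟨le_rfl, fun i _ => hx i⟩, ?_⟩
    rw [sum_insert_update_smul ha, zero_smul, zero_add, hxb]
  rcases le_or_gt 0 (f (v a)) with hfa | hfa
  · exact .inr ⟨f, forall_mem_insert _ _ _ |>.2 ⟨hfa, hf⟩, hfb⟩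
  let P : M →ₗ[𝕜] M := LinearMap.id - (f (v a))⁻¹ • f.smulRight (v a)
  have hP : ∀ u, P u = u - (f u / f (v a)) • v a := fun u => by
    simp [P, div_eq_inv_mul, mul_smul]
  rcases ih (P ∘ v) (P b) with ⟨x, hx, hxb⟩ | ⟨g, hg, hgb⟩
  · set u := ∑ i ∈ s, x i • v i
    have hPu : P u = P b := by simpa [u, map_sum] using hxb
    have hfu : 0 ≤ f u := by
      simpa [u, map_sum] using sum_nonneg fun i hi => mul_nonneg (hx i) (hf i hi)
    have ht : 0 ≤ (f b - f u) / f (v a) := div_nonneg_of_nonpos (by linarith) hfa.le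
    refine .inl ⟨update x a ((f b - f u) / f (v a)), le_update_iff.2 ⟨ht, fun i _ => hx i⟩, ?_⟩
    rw [sum_insert_update_smul ha]
    rw [hP, hP] at hPu
    linear_combination (norm := module) hPu
  · refine .inr ⟨g ∘ₗ P, forall_mem_insert _ _ _ |>.2 ⟨?_, hg⟩, hgb⟩
    simp [hP, hfa.ne]

theorem exists_nonneg_sum_smul_eq_or_exists_dual_nonneg_apply_neg (s : Finset ι)
    (v : ι → M) (b : M) :
    (∃ x : ι → 𝕜, 0 ≤ x ∧ ∑ i ∈ s, x i • v i = b) ∨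
      ∃ f : Module.Dual 𝕜 M, (∀ i ∈ s, 0 ≤ f (v i)) ∧ f b < 0 := by
  classical
  induction s using Finset.induction_on generalizing v b with
  | empty =>
    by_cases hb : b = 0
    · exact .inl ⟨0, le_rfl, by simp [hb]⟩
    · obtain ⟨f, hf⟩ := Module.exists_dual_apply_neg (𝕜 := 𝕜) hb
      exact .inr ⟨f, by simp, hf⟩
  | insert a s ha ih => exact farkas_insert ha ih v b

theorem Matrix.exists_nonneg_mulVec_eq_or_exists_vecMul_nonneg_dotProduct_neg {m n : Type*}
    [Fintype m] [Fintype n] (A : Matrix m n 𝕜) (b : m → 𝕜) :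
    (∃ x, 0 ≤ x ∧ A *ᵥ x = b) ∨ ∃ y, 0 ≤ y ᵥ* A ∧ y ⬝ᵥ b < 0 := by
  classical
  rcases exists_nonneg_sum_smul_eq_or_exists_dual_nonneg_apply_neg (𝕜 := 𝕜) univ Aᵀ b with
    ⟨x, hx, hxb⟩ | ⟨f, hf, hfb⟩
  · exact .inl ⟨x, hx, by rwa [← vecMul_transpose, vecMul_eq_sum]⟩
  · set y := (dotProductEquiv 𝕜 m).symm f
    have hy : ∀ u, f u = y ⬝ᵥ u := fun u => by
      rw [← (dotProductEquiv 𝕜 m).apply_symm_apply f]; rfl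
    exact .inr ⟨y, fun j => (hf j (mem_univ j)).trans_eq (hy (Aᵀ j)), hy b ▸ hfb⟩

end Farkas

section IntervalBounds

variable {R m n : Type*} [CommRing R] [LinearOrder R] [IsStrictOrderedRing R]
  [Fintype m]

lemma exists_sign_mul_eq_abs (y : R) : ∃ σ : R, (σ = 1 ∨ σ = -1) ∧ σ * y = |y| := by
  rcases le_or_gt 0 y with h | h
  · exact ⟨1, .inl rfl, by rw [one_mul, abs_of_nonneg h]⟩
  · exact ⟨-1, .inr rfl, by rw [neg_one_mul, abs_of_neg h]⟩

lemma sub_mul_le_mul_abs {a c d : R} (h : |a - c| ≤ d) (y : R) : (a - c) * y ≤ d * |y| :=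
  calc (a - c) * y ≤ |(a - c) * y| := le_abs_self _
    _ = |a - c| * |y| := abs_mul _ _
    _ ≤ d * |y| := mul_le_mul_of_nonneg_right h (abs_nonneg y)

lemma vecMul_le_vecMul_add_diagonal_mul [DecidableEq m] {A Ac AΔ : Matrix m n R}
    (hA : ∀ i j, |A i j - Ac i j| ≤ AΔ i j) {y s : m → R} (hs : ∀ i, s i * y i = |y i|) :
    y ᵥ* A ≤ y ᵥ* (Ac + diagonal s * AΔ) := fun j => by
  simp only [vecMul, dotProduct, Matrix.add_apply, diagonal_mul]
  refine sum_le_sum fun i _ => ?_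
  linear_combination sub_mul_le_mul_abs (hA i j) (y i) - AΔ i j * hs i

lemma dotProduct_sub_mul_le {b bc bΔ : m → R} (hb : ∀ i, |b i - bc i| ≤ bΔ i)
    {y s : m → R} (hs : ∀ i, s i * y i = |y i|) :
    y ⬝ᵥ (fun i => bc i - s i * bΔ i) ≤ y ⬝ᵥ b := by
  refine sum_le_sum fun i _ => ?_
  linear_combination sub_mul_le_mul_abs (abs_sub_comm (b i) (bc i) ▸ hb i) (y i) - bΔ i * hs i

end IntervalBounds

/-- `𝐀x = 𝐛, x ≥ 0` is strongly solvable iff for each sign vector `s` the system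
`(A_c + diag(s)A_Δ)x = b_c − diag(s)b_Δ`, `x ≥ 0`, is solvable. -/
theorem strong_solvability_equations_nonneg_iff {m n : ℕ}
    (Ac AΔ : Matrix (Fin m) (Fin n) ℝ) (bc bΔ : Fin m → ℝ)
    (hAΔ : ∀ i j, 0 ≤ AΔ i j) (hbΔ : ∀ i, 0 ≤ bΔ i) :
    (∀ A : Matrix (Fin m) (Fin n) ℝ, (∀ i j, |A i j - Ac i j| ≤ AΔ i j) →
     ∀ b : Fin m → ℝ, (∀ i, |b i - bc i| ≤ bΔ i) →
      ∃ x : Fin n → ℝ, A.mulVec x = b ∧ (∀ j, 0 ≤ x j))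
    ↔
    (∀ s : Fin m → ℝ, (∀ i, s i = 1 ∨ s i = -1) →
      ∃ x : Fin n → ℝ, (∀ j, 0 ≤ x j) ∧
        (Ac + Matrix.diagonal s * AΔ).mulVec x = fun i => bc i - s i * bΔ i) := by
  constructor
  · intro H s hs
    have hs1 : ∀ i, |s i| = 1 := fun i => by rcases hs i with h | h <;> simp [h]
    obtain ⟨x, hAx, hx⟩ := H (Ac + diagonal s * AΔ)
      (fun i j => by simp [diagonal_mul, abs_mul, hs1, abs_of_nonneg (hAΔ i j)])
      (fun i => bc i - s i * bΔ i)
      (fun i => by simp [abs_mul, hs1, abs_of_nonneg (hbΔ i)])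
    exact ⟨x, hx, hAx⟩
  · intro H A hA b hb
    rcases exists_nonneg_mulVec_eq_or_exists_vecMul_nonneg_dotProduct_neg A b with
      ⟨x, hx, hAx⟩ | ⟨y, hyA, hyb⟩
    · exact ⟨x, hAx, hx⟩
    choose s hs hsy using fun i => exists_sign_mul_eq_abs (y i)
    obtain ⟨x, hx, hAx⟩ := H s hs
    have : 0 ≤ y ⬝ᵥ b :=
      calc 0 ≤ y ᵥ* A ⬝ᵥ x := dotProduct_nonneg_of_nonneg hyA hx
        _ ≤ y ᵥ* (Ac + diagonal s * AΔ) ⬝ᵥ x :=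
          dotProduct_le_dotProduct_of_nonneg_right (vecMul_le_vecMul_add_diagonal_mul hA hsy) hx
        _ = y ⬝ᵥ (fun i => bc i - s i * bΔ i) := by rw [← dotProduct_mulVec, hAx]
        _ ≤ y ⬝ᵥ b := dotProduct_sub_mul_le hb hsy
    exact absurd hyb this.not_gt
end
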